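/- Let κ be an uncountable regular cardinal and let B be a type which is a κ-presentable object of Type. Then the terminal object of the over category Over B (namely the identity map B → B) is κ-presentable, and the binary categorical product (given by the fiber product over B) of any two κ-presentable objects of Over B is again a κ-presentable object of Over B. -/

import Mathlib

universe w v u u'

open CategoryTheory Limits Opposite

/-- A small category `J` is `κ`-filtered if every diagram in it indexed by a category with
fewer than `κ` objects and fewer than `κ` arrows admits a cocone. -/
def IsCardFiltered (J : Type w) [SmallCategory J] (κ : Cardinal.{w}) : Prop :=
  ∀ (A : Type w) [SmallCategory A], ∀ (F : A ⥤ J),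
    Cardinal.mk A < κ → Cardinal.mk (Arrow A) < κ → Nonempty (Limits.Cocone F)

/-- An object `X` of a locally small category `C` is `κ`-presentable if the functor
`Hom(X, -) : C ⥤ Type` preserves colimits of (small) `κ`-filtered diagrams. -/
def IsCardPresentable {C : Type u} [Category.{v} C] (κ : Cardinal.{v}) (X : C) : Prop :=
  ∀ (J : Type v) [SmallCategory J], IsCardFiltered J κ →
    PreservesColimitsOfShape J (coyoneda.obj (op X))

/-!
For a regular cardinal `κ` and a type `B`, an object `X` of `Over B` is `κ`-presentable exactly
when `X.left` has fewer than `κ` elements. If `X.left` is small, it is `κ`-presentable in `Type`,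
and any lift of `f.left : X.left ⟶ c.pt.left` to a stage of a diagram is automatically a morphism
over `B`, because the colimit injections are. Conversely, `X` is the `κ`-filtered colimit in
`Over B` of its subsets of size `< κ`, so `𝟙 X` factors through one of them. Both claims then
reduce to cardinality: `B` is small because it is `κ`-presentable in `Type`, and the domain of
`P ⨯ Q` is the fibre product `P.left ×_B Q.left ⊆ P.left × Q.left`.
-/

section Comparison

variable (κ : Cardinal.{w}) [Fact κ.IsRegular]

lemma isCardFiltered_iff_isCardinalFiltered (J : Type w) [SmallCategory J] :
    IsCardFiltered J κ ↔ IsCardinalFiltered J κ := by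
  simp only [IsCardFiltered, ← hasCardinalLT_iff_cardinal_mk_lt]
  exact ⟨fun hJ ↦ ⟨fun F hA ↦ hJ _ F (hasCardinalLT_of_hasCardinalLT_arrow hA) hA⟩,
    fun _ A _ F _ hA ↦ IsCardinalFiltered.nonempty_cocone F hA⟩

lemma isCardPresentable_iff_isCardinalPresentable {C : Type u} [Category.{w} C] (X : C) :
    IsCardPresentable κ X ↔ IsCardinalPresentable X κ := by
  refine ⟨fun h ↦ ⟨fun J _ hJ ↦ h J ((isCardFiltered_iff_isCardinalFiltered κ J).2 hJ)⟩,
    fun h J _ hJ ↦ ?_⟩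
  have := (isCardFiltered_iff_isCardinalFiltered κ J).1 hJ
  exact h.preservesColimitOfShape J

end Comparison

namespace CategoryTheory.Over

lemma isCardinalPresentable_of_isCardinalPresentable_left {C : Type u} [Category.{v} C]
    [HasColimitsOfSize.{v, v} C] {B : C} (κ : Cardinal.{v}) [Fact κ.IsRegular] (X : Over B)
    [IsCardinalPresentable X.left κ] : IsCardinalPresentable X κ where
  preservesColimitOfShape J _ _ := ⟨fun {F} ↦ ⟨fun {c} hc ↦ ⟨by
    have := isFiltered_of_isCardinalFiltered J κ
    have hc' := isColimitOfPreserves (Over.forget B) hc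
    refine Types.FilteredColimit.isColimitOf' _ _ (fun f ↦ ?_) (fun j f g h ↦ ?_)
    · obtain ⟨j, (g : X.left ⟶ (F.obj j).left), hg : g ≫ (c.ι.app j).left = f.left⟩ :=
        IsCardinalPresentable.exists_hom_of_isColimit κ hc' f.left
      refine ⟨j, Over.homMk g ?_, Over.OverMorphism.ext ?_⟩
      · calc g ≫ (F.obj j).hom = (g ≫ (c.ι.app j).left) ≫ c.pt.hom := by simp
          _ = X.hom := by rw [hg]; exact Over.w f
      · simpa using hg.symm
    · obtain ⟨k, a, ha⟩ := IsCardinalPresentable.exists_eq_of_isColimit' κ hc' f.left g.left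
        (congr_arg CommaMorphism.left h)
      exact ⟨k, a, Over.OverMorphism.ext ha⟩⟩⟩⟩

variable {B : Type u}

lemma hasCardinalLT_prod_left {κ : Cardinal.{u}} (hκ : Cardinal.aleph0 ≤ κ) {P Q : Over B}
    (hP : HasCardinalLT P.left κ) (hQ : HasCardinalLT Q.left κ) :
    HasCardinalLT (P ⨯ Q).left κ := by
  let e := Over.prodLeftIsoPullback P Q ≪≫ Types.pullbackIsoPullback P.hom Q.hom
  exact (hasCardinalLT_prod hκ hP hQ).of_injective (fun a ↦ (e.hom a).1)
    (Subtype.val_injective.comp e.toEquiv.injective)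

variable (κ : Cardinal.{u}) [Fact κ.IsRegular]

def smallSubsetsCocone (X : Over B) :
    Cocone ((HasCardinalLT.Set.functor X.left κ).toOver B (fun _ ↦ ↾(fun x ↦ X.hom x.1))
      (fun _ ↦ rfl)) where
  pt := X
  ι.app S := Over.homMk (↾Subtype.val)

noncomputable def isColimitSmallSubsetsCocone (X : Over B) :
    IsColimit (smallSubsetsCocone κ X) :=
  isColimitOfReflects (Over.forget B)
    (HasCardinalLT.Set.isColimitCocone X.left κ (Cardinal.IsRegular.aleph0_le Fact.out))

lemma hasCardinalLT_left_of_isCardinalPresentable (X : Over B) [IsCardinalPresentable X κ] :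
    HasCardinalLT X.left κ := by
  obtain ⟨S, f, hf⟩ :=
    IsCardinalPresentable.exists_hom_of_isColimit κ (isColimitSmallSubsetsCocone κ X) (𝟙 X)
  have hval (x : X.left) : (f.left x).1 = x := by
    have := ConcreteCategory.congr_hom (congr_arg CommaMorphism.left hf) x
    simp only [smallSubsetsCocone, Over.comp_left, Over.homMk_left, Over.id_left] at this
    exact this
  exact S.2.of_injective f.left (Function.LeftInverse.injective hval)

lemma isCardinalPresentable_iff_hasCardinalLT_left (X : Over B) :
    IsCardinalPresentable X κ ↔ HasCardinalLT X.left κ := by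
  refine ⟨fun _ ↦ hasCardinalLT_left_of_isCardinalPresentable κ X, fun hX ↦ ?_⟩
  have := hX.isCardinalPresentable
  exact isCardinalPresentable_of_isCardinalPresentable_left κ X

end CategoryTheory.Over

theorem stmt14_general (κ : Cardinal.{u}) (hκ : κ.IsRegular)
    (B : Type u) (hB : IsCardPresentable κ B) :
    IsCardPresentable κ (Over.mk (𝟙 B)) ∧
      ∀ P Q : Over B, IsCardPresentable κ P → IsCardPresentable κ Q →
        IsCardPresentable κ (P ⨯ Q) := by
  have : Fact κ.IsRegular := ⟨hκ⟩
  rw [isCardPresentable_iff_isCardinalPresentable, Types.isCardinalPresentable_iff] at hB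
  simp only [isCardPresentable_iff_isCardinalPresentable,
    Over.isCardinalPresentable_iff_hasCardinalLT_left]
  exact ⟨hB, fun P Q hP hQ ↦ Over.hasCardinalLT_prod_left hκ.aleph0_le hP hQ⟩

/-- For an uncountable regular cardinal `κ` and a `κ`-presentable type `B`, the terminal
object `id : B → B` of `Over B` is `κ`-presentable, and the binary product (fiber product
over `B`) of two `κ`-presentable objects of `Over B` is `κ`-presentable. -/
theorem stmt14 (κ : Cardinal.{u}) (hκ : κ.IsRegular) (hκ' : Cardinal.aleph0 < κ)
    (B : Type u) (hB : IsCardPresentable κ B) :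
    IsCardPresentable κ (Over.mk (𝟙 B)) ∧
      ∀ P Q : Over B, IsCardPresentable κ P → IsCardPresentable κ Q →
        IsCardPresentable κ (P ⨯ Q) :=
  stmt14_general κ hκ B hB
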